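/- Every theorem of the interpretability logic ILM is valid in every converse well-founded provability model with necessitation: if ILM ⊢ A, then 𝒫, w ⊩ A for every such model and world. In particular, Montagna's axiom (B ▷ C) → ((□D ∧ B) ▷ (□D ∧ C)) is valid: if for every u ⊐ w and every E, T_u ⊢ C → ◇E implies T_u ⊢ B → ◇E, then for every u ⊐ w and every E, T_u ⊢ (□D ∧ C) → ◇E implies T_u ⊢ (□D ∧ B) → ◇E. -/

import Mathlib

/-- Formulas of the interpretability language: atoms, ⊥, → and the binary
modality ▷. -/
inductive IFml : Type
  | atom : ℕ → IFml
  | bot  : IFml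
  | imp  : IFml → IFml → IFml
  | rhd  : IFml → IFml → IFml
deriving DecidableEq

/-- `□A := ¬A ▷ ⊥`. -/
def ibox (A : IFml) : IFml := .rhd (.imp A .bot) .bot

/-- `◇A := ¬□¬A`. -/
def idia (A : IFml) : IFml := .imp (ibox (.imp A .bot)) .bot

/-- Conjunction. -/
def iand (A B : IFml) : IFml := .imp (.imp A (.imp B .bot)) .bot

/-- Disjunction. -/
def ior (A B : IFml) : IFml := .imp (.imp A .bot) B

/-- Boolean evaluation over the interpretability language, where
▷-formulas act as atoms. -/
def ievalCL (v : IFml → Bool) : IFml → Bool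
  | .atom n => v (.atom n)
  | .bot => false
  | .imp A B => !(ievalCL v A) || ievalCL v B
  | .rhd A B => v (.rhd A B)

/-- Classical tautology in the interpretability language. -/
def ITaut (A : IFml) : Prop := ∀ v, ievalCL v A = true

/-- A formula of `ℒ_▷` is purely modal if every atom occurs in the scope of
some ▷. -/
def IPurelyModal : IFml → Prop
  | .atom _ => False
  | .bot => True
  | .imp A B => IPurelyModal A ∧ IPurelyModal B
  | .rhd _ _ => True

/-- The interpretability logic ILM: GL (formulated in `ℒ_▷` via
`□A := ¬A ▷ ⊥`) together with the axioms J1–J5 including Montagna's axiom,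
with modus ponens and (admissible) necessitation. -/
inductive ILMprf : IFml → Prop
  | taut {A} : ITaut A → ILMprf A
  | k (A B : IFml) : ILMprf (.imp (ibox (.imp A B)) (.imp (ibox A) (ibox B)))
  | four (A : IFml) : ILMprf (.imp (ibox A) (ibox (ibox A)))
  | lob (A : IFml) : ILMprf (.imp (ibox (.imp (ibox A) A)) (ibox A))
  | j1 (A B : IFml) : ILMprf (.imp (ibox (.imp A B)) (.rhd A B))
  | j2 (A B C : IFml) : ILMprf (.imp (iand (.rhd A B) (.rhd B C)) (.rhd A C))
  | j3 (A B C : IFml) : ILMprf (.imp (iand (.rhd B A) (.rhd C A)) (.rhd (ior B C) A))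
  | j4 (A : IFml) : ILMprf (.rhd (idia A) A)
  | montagna (B C D : IFml) :
      ILMprf (.imp (.rhd B C) (.rhd (iand (ibox D) B) (iand (ibox D) C)))
  | mp {A B} : ILMprf (.imp A B) → ILMprf A → ILMprf B
  | nec {A} : ILMprf A → ILMprf (ibox A)

/-- A provability pre-model for the language `ℒ_▷`. -/
structure IPModel (W : Type*) where
  R : W → W → Prop
  T : W → Set IFml
  V : W → ℕ → Prop

/-- Forcing for `ℒ_▷`: `w ⊩ A ▷ B` iff for every `u ⊐ w` and every `E`,
`T_u ⊢ B → ◇E` implies `T_u ⊢ A → ◇E` (Π₁-conservativity). -/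
def iforce {W : Type*} (P : IPModel W) : W → IFml → Prop
  | w, .atom n => P.V w n
  | _, .bot => False
  | w, .imp A B => iforce P w A → iforce P w B
  | w, .rhd A B => ∀ u, P.R w u → ∀ E,
      IFml.imp B (idia E) ∈ P.T u → IFml.imp A (idia E) ∈ P.T u

/-- `𝒫, w ⊩⁺ A`. -/
def iforcePlus {W : Type*} (P : IPModel W) (w : W) (A : IFml) : Prop :=
  ∃ u, P.R u w ∧ ∀ v, Relation.TransGen P.R u v → iforce P v A

/-- A world is ⊏-accessible. -/
def IAccessible {W : Type*} (P : IPModel W) (w : W) : Prop := ∃ v, P.R v w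

/-- Provability model for `ℒ_▷`: classical theories at accessible worlds and
modal completeness for purely modal `ℒ_▷`-formulas. -/
def IsIPModel {W : Type*} (P : IPModel W) : Prop :=
  (∀ w, IAccessible P w →
    (∀ A, ITaut A → A ∈ P.T w) ∧
    (∀ A B, IFml.imp A B ∈ P.T w → A ∈ P.T w → B ∈ P.T w)) ∧
  (∀ w A, IPurelyModal A → iforcePlus P w A → A ∈ P.T w)


/-! ### Auxiliary lemmas for the soundness proof -/

section ILMSoundAux

/-- Forcing of a classical tautology. -/
private lemma iforce_of_itaut {W : Type*} (P : IPModel W) (w : W) {A : IFml}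
    (h : ITaut A) : iforce P w A := by
  classical
  have main : ∀ B, ievalCL (fun X => decide (iforce P w X)) B = true ↔ iforce P w B := by
    intro B
    induction B with
    | atom n => simp only [ievalCL, iforce]; exact decide_eq_true_iff
    | bot => simp [ievalCL, iforce]
    | imp X Y ihX ihY =>
        simp only [ievalCL, iforce, Bool.or_eq_true, Bool.not_eq_true', ihX, ihY]
        constructor
        · rintro (hx | hy) hX
          · rw [← ihX] at hX; simp [hx] at hX
          · exact hy
        · intro hxy
          by_cases hX : iforce P w X
          · exact Or.inr (hxy hX)
          · left; rw [← ihX] at hX; simpa using hX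
    | rhd X Y ihX ihY => simp [ievalCL]
  exact (main A).mp (h _)

private lemma taut_T0 (X : IFml) : ITaut (.imp .bot X) := by
  intro v; simp [ievalCL]

private lemma taut_T1 (A X : IFml) : ITaut (.imp A (.imp (.imp A .bot) X)) := by
  intro v; simp only [ievalCL]
  cases ievalCL v A <;> cases ievalCL v X <;> rfl

private lemma taut_T2 (A B X : IFml) :
    ITaut (.imp (.imp (.imp (.imp A B) .bot) X)
      (.imp (.imp (.imp A .bot) X) (.imp (.imp B .bot) X))) := by
  intro v; simp only [ievalCL]
  cases ievalCL v A <;> cases ievalCL v B <;> cases ievalCL v X <;> rfl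

private lemma taut_T3 (A B X : IFml) :
    ITaut (.imp (.imp A B) (.imp (.imp B X) (.imp A X))) := by
  intro v; simp only [ievalCL]
  cases ievalCL v A <;> cases ievalCL v B <;> cases ievalCL v X <;> rfl

private lemma taut_T4 (B C X : IFml) :
    ITaut (.imp (.imp B X) (.imp (.imp C X) (.imp (.imp (.imp B .bot) C) X))) := by
  intro v; simp only [ievalCL]
  cases ievalCL v B <;> cases ievalCL v C <;> cases ievalCL v X <;> rfl

private lemma taut_T5 (A X : IFml) :
    ITaut (.imp (.imp (.imp A .bot) (.imp X .bot)) (.imp X (.imp (.imp A .bot) .bot))) := by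
  intro v; simp only [ievalCL]
  cases ievalCL v A <;> cases ievalCL v X <;> rfl

private lemma taut_T6 (A X : IFml) :
    ITaut (.imp (.imp (.imp A .bot) (.imp X .bot)) (.imp X A)) := by
  intro v; simp only [ievalCL]
  cases ievalCL v A <;> cases ievalCL v X <;> rfl

private lemma taut_T7 (A Y : IFml) :
    ITaut (.imp (.imp A (.imp Y .bot)) (.imp Y (.imp A .bot))) := by
  intro v; simp only [ievalCL]
  cases ievalCL v A <;> cases ievalCL v Y <;> rfl

private lemma taut_T9 (Pf Q Y Z1 Z2 : IFml) :
    ITaut (.imp (.imp Pf Q) (.imp (.imp Q (.imp Z1 Z2))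
      (.imp (.imp Y Z1) (.imp Pf (.imp (.imp Z2 .bot) (.imp Y .bot)))))) := by
  intro v; simp only [ievalCL]
  cases ievalCL v Pf <;> cases ievalCL v Q <;> cases ievalCL v Y <;>
    cases ievalCL v Z1 <;> cases ievalCL v Z2 <;> rfl

private lemma taut_T10 (X Y Z C : IFml) :
    ITaut (.imp (.imp Z Y) (.imp (.imp Z X)
      (.imp (.imp (iand X C) (.imp Y .bot)) (.imp C (.imp Z .bot))))) := by
  intro v; simp only [ievalCL, iand]
  cases ievalCL v X <;> cases ievalCL v Y <;> cases ievalCL v Z <;>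
    cases ievalCL v C <;> rfl

private lemma taut_T11 (X Y Z B : IFml) :
    ITaut (.imp (.imp X (.imp Y Z))
      (.imp (.imp B (.imp Z .bot)) (.imp (iand X B) (.imp Y .bot)))) := by
  intro v; simp only [ievalCL, iand]
  cases ievalCL v X <;> cases ievalCL v Y <;> cases ievalCL v Z <;>
    cases ievalCL v B <;> rfl

private lemma taut_z1 (E D : IFml) :
    ITaut (.imp (.imp (ior E (.imp D .bot)) .bot) (.imp E .bot)) := by
  intro v; simp only [ievalCL, ior]
  cases ievalCL v E <;> cases ievalCL v D <;> rfl

private lemma taut_z2 (E D : IFml) :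
    ITaut (.imp (.imp (ior E (.imp D .bot)) .bot) D) := by
  intro v; simp only [ievalCL, ior]
  cases ievalCL v E <;> cases ievalCL v D <;> rfl

private lemma taut_z3 (E D : IFml) :
    ITaut (.imp D (.imp (.imp E .bot) (.imp (ior E (.imp D .bot)) .bot))) := by
  intro v; simp only [ievalCL, ior]
  cases ievalCL v E <;> cases ievalCL v D <;> rfl

private lemma ilm_imp_trans {A B C : IFml} (h1 : ILMprf (.imp A B))
    (h2 : ILMprf (.imp B C)) : ILMprf (.imp A C) :=
  .mp (.mp (.taut (taut_T3 A B C)) h1) h2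

private lemma ilm_boxmono {A B : IFml} (h : ILMprf (.imp A B)) :
    ILMprf (.imp (ibox A) (ibox B)) :=
  .mp (.k A B) (.nec h)

/-- GL-lemma for J4: `□(A→◇E) → (◇A→◇E)`. -/
private lemma ilm_L1 (A E : IFml) :
    ILMprf (.imp (ibox (.imp A (idia E))) (.imp (idia A) (idia E))) := by
  have s1 : ILMprf (.imp (ibox (.imp A (idia E)))
      (ibox (.imp (ibox (.imp E .bot)) (.imp A .bot)))) :=
    ilm_boxmono (ILMprf.taut (taut_T7 A (ibox (.imp E .bot))))
  have s2 := ILMprf.k (ibox (.imp E .bot)) (.imp A .bot)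
  have s3 := ILMprf.four (.imp E .bot)
  exact .mp (.mp (.mp (.taut (taut_T9 (ibox (.imp A (idia E)))
    (ibox (.imp (ibox (.imp E .bot)) (.imp A .bot)))
    (ibox (.imp E .bot)) (ibox (ibox (.imp E .bot))) (ibox (.imp A .bot)))) s1) s2) s3

/-- GL-lemma for Montagna's axiom: `((□D∧C)→◇E) → (C→◇(E∨¬D))`. -/
private lemma ilm_L2 (C D E : IFml) :
    ILMprf (.imp (.imp (iand (ibox D) C) (idia E))
      (.imp C (idia (ior E (.imp D .bot))))) := by
  have s1 : ILMprf (.imp (ibox (.imp (ior E (.imp D .bot)) .bot)) (ibox (.imp E .bot))) :=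
    ilm_boxmono (.taut (taut_z1 E D))
  have s2 : ILMprf (.imp (ibox (.imp (ior E (.imp D .bot)) .bot)) (ibox D)) :=
    ilm_boxmono (.taut (taut_z2 E D))
  exact .mp (.mp (.taut (taut_T10 (ibox D) (ibox (.imp E .bot))
    (ibox (.imp (ior E (.imp D .bot)) .bot)) C)) s1) s2

/-- GL-lemma for Montagna's axiom: `(B→◇(E∨¬D)) → ((□D∧B)→◇E)`. -/
private lemma ilm_L3 (B D E : IFml) :
    ILMprf (.imp (.imp B (idia (ior E (.imp D .bot))))
      (.imp (iand (ibox D) B) (idia E))) := by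
  have z3 : ILMprf (.imp D (.imp (.imp E .bot) (.imp (ior E (.imp D .bot)) .bot))) :=
    .taut (taut_z3 E D)
  have s3a : ILMprf (.imp (ibox D)
      (ibox (.imp (.imp E .bot) (.imp (ior E (.imp D .bot)) .bot)))) := ilm_boxmono z3
  have s3b := ILMprf.k (IFml.imp E .bot) (IFml.imp (ior E (.imp D .bot)) .bot)
  have s3 : ILMprf (.imp (ibox D)
      (.imp (ibox (.imp E .bot)) (ibox (.imp (ior E (.imp D .bot)) .bot)))) :=
    ilm_imp_trans s3a s3b
  exact .mp (.taut (taut_T11 (ibox D) (ibox (.imp E .bot))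
    (ibox (.imp (ior E (.imp D .bot)) .bot)) B)) s3

private lemma iforce_iand {W : Type*} (P : IPModel W) (w : W) (A B : IFml) :
    iforce P w (iand A B) ↔ iforce P w A ∧ iforce P w B := by
  show ((iforce P w A → (iforce P w B → False)) → False) ↔ _
  tauto

/-- Every ILM theorem belongs to the theory of `u` whenever `u` is a successor
of a world `w` all of whose iterated successors force every ILM theorem. -/
private lemma ilm_mem_all {W : Type*} (P : IPModel W) (hP : IsIPModel P)
    (hnec : ∀ w, IAccessible P w → ∀ A, A ∈ P.T w → ibox A ∈ P.T w)
    {w u : W} (hwu : P.R w u)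
    (hF : ∀ v, Relation.TransGen P.R w v → ∀ B, ILMprf B → iforce P v B) :
    ∀ A, ILMprf A → A ∈ P.T u := by
  have hacc : IAccessible P u := ⟨w, hwu⟩
  intro A hA
  induction hA with
  | taut h => exact (hP.1 u hacc).1 _ h
  | mp h1 h2 ih1 ih2 => exact (hP.1 u hacc).2 _ _ ih1 ih2
  | nec h ih => exact hnec u hacc _ ih
  | k A B =>
      exact hP.2 u _ ⟨trivial, trivial, trivial⟩
        ⟨w, hwu, fun v hv => hF v hv _ (ILMprf.k A B)⟩
  | four A =>
      exact hP.2 u _ ⟨trivial, trivial⟩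
        ⟨w, hwu, fun v hv => hF v hv _ (ILMprf.four A)⟩
  | lob A =>
      exact hP.2 u _ ⟨trivial, trivial⟩
        ⟨w, hwu, fun v hv => hF v hv _ (ILMprf.lob A)⟩
  | j1 A B =>
      exact hP.2 u _ ⟨trivial, trivial⟩
        ⟨w, hwu, fun v hv => hF v hv _ (ILMprf.j1 A B)⟩
  | j2 A B C =>
      exact hP.2 u _ ⟨⟨⟨trivial, trivial, trivial⟩, trivial⟩, trivial⟩
        ⟨w, hwu, fun v hv => hF v hv _ (ILMprf.j2 A B C)⟩
  | j3 A B C =>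
      exact hP.2 u _ ⟨⟨⟨trivial, trivial, trivial⟩, trivial⟩, trivial⟩
        ⟨w, hwu, fun v hv => hF v hv _ (ILMprf.j3 A B C)⟩
  | j4 A =>
      exact hP.2 u _ trivial ⟨w, hwu, fun v hv => hF v hv _ (ILMprf.j4 A)⟩
  | montagna B C D =>
      exact hP.2 u _ ⟨trivial, trivial⟩
        ⟨w, hwu, fun v hv => hF v hv _ (ILMprf.montagna B C D)⟩

end ILMSoundAux

/-- Soundness of ILM for converse well-founded provability models with
necessitation; in particular Montagna's axiom is valid in every such model. -/
theorem ILM_sound {W : Type*} (P : IPModel W) (hP : IsIPModel P)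
    (hcwf : ¬ ∃ f : ℕ → W, ∀ n, P.R (f n) (f (n + 1)))
    (hnec : ∀ w, IAccessible P w → ∀ A, A ∈ P.T w → ibox A ∈ P.T w) :
    ∀ A, ILMprf A → ∀ w, iforce P w A := by
  classical
  -- converse well-foundedness
  have hwf : WellFounded (Function.swap P.R) := by
    by_contra hw
    have hex : ∃ a, ¬ Acc (Function.swap P.R) a := by
      by_contra h
      push_neg at h
      exact hw ⟨h⟩
    obtain ⟨a, ha⟩ := hex
    have step : ∀ x : {a // ¬ Acc (Function.swap P.R) a},
        ∃ y : {a // ¬ Acc (Function.swap P.R) a}, Function.swap P.R y.1 x.1 := by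
      rintro ⟨x, hx⟩
      obtain ⟨b, hb1, hb2⟩ := exists_not_acc_lt_of_not_acc hx
      exact ⟨⟨b, hb1⟩, hb2⟩
    choose g hg using step
    refine hcwf ⟨fun n => (g^[n] ⟨a, ha⟩).1, fun n => ?_⟩
    show P.R (g^[n] ⟨a, ha⟩).1 (g^[n+1] ⟨a, ha⟩).1
    rw [Function.iterate_succ_apply' g n]
    exact hg (g^[n] ⟨a, ha⟩)
  have hwft : WellFounded (fun a b : W => Relation.TransGen P.R b a) := by
    have h2 : (fun a b : W => Relation.TransGen P.R b a)
        = Relation.TransGen (Function.swap P.R) := by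
      funext a b
      exact propext Relation.transGen_swap.symm
    rw [h2]
    exact hwf.transGen
  have key : ∀ x : W, ∀ A, ILMprf A → iforce P x A := by
    refine fun x => hwft.induction (C := fun z => ∀ A, ILMprf A → iforce P z A) x ?_
    intro z IH
    -- all ILM theorems belong to the theories of successors of z
    have hMem : ∀ u, P.R z u → ∀ A, ILMprf A → A ∈ P.T u :=
      fun u hu => ilm_mem_all P hP hnec hu (fun v hv => IH v hv)
    have taut_u : ∀ u, P.R z u → ∀ {A : IFml}, ITaut A → A ∈ P.T u :=
      fun u hu {A} h => (hP.1 u ⟨z, hu⟩).1 _ h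
    have mp_u : ∀ u, P.R z u → ∀ {A B : IFml},
        IFml.imp A B ∈ P.T u → A ∈ P.T u → B ∈ P.T u :=
      fun u hu {A B} h1 h2 => (hP.1 u ⟨z, hu⟩).2 _ _ h1 h2
    -- box elimination: if z forces □A then A is in the theory of each successor
    have boxE : ∀ {A : IFml}, iforce P z (ibox A) → ∀ u, P.R z u → A ∈ P.T u := by
      intro A h u hu
      have hall : ∀ E, IFml.imp (.imp A .bot) (idia E) ∈ P.T u :=
        fun E => h u hu E (taut_u u hu (taut_T0 _))
      have h1 := hall (.imp A .bot)
      have h2 : IFml.imp (ibox (.imp (.imp A .bot) .bot)) (.imp (.imp A .bot) .bot)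
          ∈ P.T u :=
        mp_u u hu (taut_u u hu (taut_T5 A (ibox (.imp (.imp A .bot) .bot)))) h1
      have h3 := hnec u ⟨z, hu⟩ _ h2
      have h4 : ibox (.imp (.imp A .bot) .bot) ∈ P.T u :=
        mp_u u hu (hMem u hu _ (ILMprf.lob (.imp (.imp A .bot) .bot))) h3
      exact mp_u u hu
        (mp_u u hu (taut_u u hu (taut_T6 A (ibox (.imp (.imp A .bot) .bot)))) h1) h4
    -- box introduction
    have boxI : ∀ {A : IFml}, (∀ u, P.R z u → A ∈ P.T u) → iforce P z (ibox A) := by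
      intro A h u hu E _
      exact mp_u u hu (taut_u u hu (taut_T1 A (idia E))) (h u hu)
    intro A hA
    induction hA with
    | taut h => exact iforce_of_itaut P z h
    | mp h1 h2 ih1 ih2 => exact ih1 ih2
    | nec h _ => exact boxI (fun u hu => hMem u hu _ h)
    | k A B =>
        intro h1 h2 u hu E hE
        exact mp_u u hu
          (mp_u u hu (taut_u u hu (taut_T2 A B (idia E))) (h1 u hu E hE)) (h2 u hu E hE)
    | four A =>
        intro h
        exact boxI (fun u hu => hnec u ⟨z, hu⟩ A (boxE h u hu))
    | lob A =>
        intro h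
        refine boxI (fun u hu => ?_)
        have h1 : IFml.imp (ibox A) A ∈ P.T u := boxE h u hu
        have h2 := hnec u ⟨z, hu⟩ _ h1
        have h3 : ibox A ∈ P.T u := mp_u u hu (hMem u hu _ (ILMprf.lob A)) h2
        exact mp_u u hu h1 h3
    | j1 A B =>
        intro h u hu E hBE
        exact mp_u u hu
          (mp_u u hu (taut_u u hu (taut_T3 A B (idia E))) (boxE h u hu)) hBE
    | j2 A B C =>
        intro h u hu E hCE
        obtain ⟨hAB, hBC⟩ := (iforce_iand P z _ _).mp h
        exact hAB u hu E (hBC u hu E hCE)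
    | j3 A B C =>
        intro h u hu E hAE
        obtain ⟨hBA, hCA⟩ := (iforce_iand P z _ _).mp h
        exact mp_u u hu
          (mp_u u hu (taut_u u hu (taut_T4 B C (idia E))) (hBA u hu E hAE))
          (hCA u hu E hAE)
    | j4 A =>
        intro u hu E hAE
        have h1 := hnec u ⟨z, hu⟩ _ hAE
        exact mp_u u hu (hMem u hu _ (ilm_L1 A E)) h1
    | montagna B C D =>
        intro h u hu E hE
        have h1 : IFml.imp C (idia (ior E (.imp D .bot))) ∈ P.T u :=
          mp_u u hu (hMem u hu _ (ilm_L2 C D E)) hE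
        have h2 : IFml.imp B (idia (ior E (.imp D .bot))) ∈ P.T u :=
          h u hu (ior E (.imp D .bot)) h1
        exact mp_u u hu (hMem u hu _ (ilm_L3 B D E)) h2
  intro A hA w
  exact key w A hA
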